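/- arXiv:2312.04883 — 3 statements merged into one kernel-verified Lean document; each statement's English description precedes it below -/
import Mathlib

section
/- Let V be a finite set partitioned into two disjoint classes C1 and C2, let f : V → ℝ^d, and let s ≥ 1. Let 𝒫 be a probability distribution over partitions of V into clusters each of size exactly s. Assume there are constants q1, q2, q12 such that: for every pair of distinct nodes u, v ∈ C1 the probability (under 𝒫) that u and v lie in the same cluster equals q1; for every pair of distinct nodes u, v ∈ C2 this probability equals q2; and for every u ∈ C1 and v ∈ C2 this probability equals q12. Then E_{P∼𝒫} [ Σ_{S_i ∈ P} Σ_{u ∈ S_i} s·‖f(u) − f(S_i)‖² ] = q1 · Σ_{unordered pairs {u,v} ⊆ C1, u≠v} ‖f(u) − f(v)‖² + q2 · Σ_{unordered pairs {u,v} ⊆ C2, u≠v} ‖f(u) − f(v)‖² + q12 · Σ_{u ∈ C1, v ∈ C2} ‖f(u) − f(v)‖², where f(S_i) = (1/s) Σ_{v ∈ S_i} f(v) is the centroid of cluster S_i. -/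
/-! Within a cluster `S` of size `s`, the variance identity
`s · Σ_{u ∈ S} ‖f u − f(S)‖² = ½ Σ_{u,v ∈ S} ‖f u − f v‖²` holds, so the cost of a partition is half
the sum of `‖f u − f v‖²` over ordered pairs lying in a common cluster. Taking expectations replaces
the indicator of "`u` and `v` share a cluster" by its probability, which is constant on each of the
blocks `C1 × C1`, `C2 × C2`, `C1 × C2`, `C2 × C1`; the diagonal contributes nothing and the two cross
blocks agree by symmetry. -/

open Finset

section Centroid

variable {V E : Type*} [NormedAddCommGroup E] [InnerProductSpace ℝ E]

lemma sum_norm_sub_sq (S : Finset V) (f : V → E) (x : E) :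
    ∑ u ∈ S, ‖f u - x‖ ^ 2
      = ∑ u ∈ S, ‖f u‖ ^ 2 - 2 * inner ℝ (∑ u ∈ S, f u) x + #S * ‖x‖ ^ 2 := by
  simp only [norm_sub_sq_real, sum_add_distrib, sum_sub_distrib, ← mul_sum, sum_inner,
    sum_const, nsmul_eq_mul]

lemma sum_sum_norm_sub_sq (S : Finset V) (f : V → E) :
    ∑ u ∈ S, ∑ v ∈ S, ‖f u - f v‖ ^ 2
      = 2 * (#S * ∑ u ∈ S, ‖f u‖ ^ 2 - ‖∑ u ∈ S, f u‖ ^ 2) := by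
  rw [sum_comm]
  simp only [sum_norm_sub_sq S f]
  rw [sum_add_distrib, sum_sub_distrib, sum_const, ← mul_sum, ← mul_sum, ← inner_sum,
    real_inner_self_eq_norm_sq, nsmul_eq_mul]
  ring

lemma sum_card_mul_norm_sub_centroid_sq (S : Finset V) (f : V → E) :
    ∑ u ∈ S, (#S : ℝ) * ‖f u - (#S : ℝ)⁻¹ • ∑ v ∈ S, f v‖ ^ 2
      = (1 / 2) * ∑ u ∈ S, ∑ v ∈ S, ‖f u - f v‖ ^ 2 := by
  rcases S.eq_empty_or_nonempty with rfl | hS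
  · simp
  have hn : (#S : ℝ) ≠ 0 := by positivity
  rw [← mul_sum, sum_norm_sub_sq, sum_sum_norm_sub_sq, real_inner_smul_right,
    real_inner_self_eq_norm_sq, norm_smul, Real.norm_of_nonneg (by positivity)]
  field_simp
  ring

end Centroid

section Clusters

lemma mem_comm_of_cluster {V : Type*} {P : V → Finset V} (hP : ∀ u v, v ∈ P u ↔ P u = P v)
    (u v : V) : v ∈ P u ↔ u ∈ P v := by
  rw [hP, hP, eq_comm]

variable {V : Type*} [Fintype V] [DecidableEq V] {P : V → Finset V}

lemma sum_eq_sum_clusters {M : Type*} [AddCommMonoid M] (hP : ∀ u v, v ∈ P u ↔ P u = P v)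
    (F : Finset V → V → M) :
    ∑ u, F (P u) u = ∑ S ∈ univ.image P, ∑ u ∈ S, F S u := by
  rw [← sum_fiberwise_of_maps_to (fun u _ => mem_image_of_mem P (mem_univ u))]
  refine sum_congr rfl fun S hS => ?_
  obtain ⟨u₀, -, rfl⟩ := mem_image.mp hS
  have hfiber : univ.filter (fun u => P u = P u₀) = P u₀ := by
    ext u
    simp [hP u₀ u, eq_comm]
  rw [hfiber]
  exact sum_congr rfl fun u hu => by rw [← (hP u₀ u).1 hu]

lemma sum_card_mul_norm_sub_centroid_sq_of_cluster {E : Type*} [NormedAddCommGroup E]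
    [InnerProductSpace ℝ E] (hP : ∀ u v, v ∈ P u ↔ P u = P v) (f : V → E) :
    ∑ u, (#(P u) : ℝ) * ‖f u - (#(P u) : ℝ)⁻¹ • ∑ v ∈ P u, f v‖ ^ 2
      = (1 / 2) * ∑ u, ∑ v ∈ P u, ‖f u - f v‖ ^ 2 := by
  calc _ = ∑ S ∈ univ.image P, ∑ u ∈ S, (#S : ℝ) * ‖f u - (#S : ℝ)⁻¹ • ∑ v ∈ S, f v‖ ^ 2 :=
        sum_eq_sum_clusters hP (fun S u => (#S : ℝ) * ‖f u - (#S : ℝ)⁻¹ • ∑ v ∈ S, f v‖ ^ 2)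
    _ = ∑ S ∈ univ.image P, (1 / 2) * ∑ u ∈ S, ∑ v ∈ S, ‖f u - f v‖ ^ 2 :=
        sum_congr rfl fun S _ => sum_card_mul_norm_sub_centroid_sq S f
    _ = _ := by
        rw [← mul_sum, sum_eq_sum_clusters hP (fun S u => ∑ v ∈ S, ‖f u - f v‖ ^ 2)]

end Clusters

section Expectation

variable {V Ω : Type*} [DecidableEq V] [Fintype Ω]

def coclusterProb (w : Ω → ℝ) (part : Ω → V → Finset V) (u v : V) : ℝ :=
  ∑ ω, w ω * if v ∈ part ω u then 1 else 0

lemma coclusterProb_comm (w : Ω → ℝ) {part : Ω → V → Finset V}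
    (hpart : ∀ ω u v, v ∈ part ω u ↔ part ω u = part ω v) (u v : V) :
    coclusterProb w part u v = coclusterProb w part v u := by
  simp only [coclusterProb, mem_comm_of_cluster (hpart _) u v]

lemma sum_mul_sum_sum_mem_eq_sum_coclusterProb_mul [Fintype V] (w : Ω → ℝ)
    (part : Ω → V → Finset V) (g : V → V → ℝ) :
    ∑ ω, w ω * ∑ u, ∑ v ∈ part ω u, g u v = ∑ u, ∑ v, coclusterProb w part u v * g u v := by
  have hind : ∀ ω u, ∑ v ∈ part ω u, g u v = ∑ v, (if v ∈ part ω u then 1 else 0) * g u v :=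
    fun ω u => by simp only [ite_mul, one_mul, zero_mul, sum_ite_mem, univ_inter]
  simp only [hind, coclusterProb, mul_sum, sum_mul, mul_assoc]
  rw [sum_comm]
  exact sum_congr rfl fun _ _ => sum_comm

end Expectation

section TwoClasses

lemma sum_sum_mul_eq_mul_sum_sum {V : Type*} {C D : Finset V} {Q g : V → V → ℝ} {q : ℝ}
    (hQ : ∀ u ∈ C, ∀ v ∈ D, Q u v = q) :
    ∑ u ∈ C, ∑ v ∈ D, Q u v * g u v = q * ∑ u ∈ C, ∑ v ∈ D, g u v := by
  rw [mul_sum]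
  exact sum_congr rfl fun u hu => by
    rw [mul_sum]
    exact sum_congr rfl fun v hv => by rw [hQ u hu v hv]

variable {V : Type*} [DecidableEq V]

lemma sum_sum_eq_sum_offDiag {M : Type*} [AddCommMonoid M] (C : Finset V) (g : V → V → M)
    (hg : ∀ u ∈ C, g u u = 0) :
    ∑ u ∈ C, ∑ v ∈ C, g u v = ∑ p ∈ C.offDiag, g p.1 p.2 := by
  rw [← sum_product', ← diag_union_offDiag, sum_union (disjoint_diag_offDiag C), sum_diag,
    sum_eq_zero hg, zero_add]

lemma sum_sum_mul_eq_mul_sum_offDiag (C : Finset V) {Q g : V → V → ℝ} {q : ℝ}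
    (hg : ∀ u, g u u = 0) (hQ : ∀ u ∈ C, ∀ v ∈ C, u ≠ v → Q u v = q) :
    ∑ u ∈ C, ∑ v ∈ C, Q u v * g u v = q * ∑ p ∈ C.offDiag, g p.1 p.2 := by
  rw [sum_sum_eq_sum_offDiag C _ fun u _ => by rw [hg, mul_zero], mul_sum]
  refine sum_congr rfl fun p hp => ?_
  obtain ⟨hp₁, hp₂, hne⟩ := mem_offDiag.mp hp
  rw [hQ _ hp₁ _ hp₂ hne]

lemma sum_sum_mul_eq_of_two_classes [Fintype V] {C1 C2 : Finset V} (hdisj : Disjoint C1 C2)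
    (hunion : C1 ∪ C2 = univ) {Q g : V → V → ℝ} {q1 q2 q12 : ℝ}
    (hQ : ∀ u v, Q u v = Q v u) (hg : ∀ u v, g u v = g v u) (hg0 : ∀ u, g u u = 0)
    (hq1 : ∀ u ∈ C1, ∀ v ∈ C1, u ≠ v → Q u v = q1)
    (hq2 : ∀ u ∈ C2, ∀ v ∈ C2, u ≠ v → Q u v = q2)
    (hq12 : ∀ u ∈ C1, ∀ v ∈ C2, Q u v = q12) :
    ∑ u, ∑ v, Q u v * g u v
      = q1 * ∑ p ∈ C1.offDiag, g p.1 p.2 + q2 * ∑ p ∈ C2.offDiag, g p.1 p.2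
        + 2 * (q12 * ∑ u ∈ C1, ∑ v ∈ C2, g u v) := by
  have hsplit : ∀ h : V → ℝ, ∑ u, h u = ∑ u ∈ C1, h u + ∑ u ∈ C2, h u := fun h => by
    rw [← sum_union hdisj, hunion]
  have hq21 : ∀ u ∈ C2, ∀ v ∈ C1, Q u v = q12 := fun u hu v hv => by rw [hQ, hq12 v hv u hu]
  have hcross : ∑ u ∈ C2, ∑ v ∈ C1, g u v = ∑ u ∈ C1, ∑ v ∈ C2, g u v :=
    sum_comm.trans (sum_congr rfl fun _ _ => sum_congr rfl fun _ _ => hg _ _)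
  simp only [hsplit, sum_add_distrib]
  rw [sum_sum_mul_eq_mul_sum_offDiag C1 hg0 hq1, sum_sum_mul_eq_mul_sum_offDiag C2 hg0 hq2,
    sum_sum_mul_eq_mul_sum_sum hq12, sum_sum_mul_eq_mul_sum_sum hq21, hcross]
  ring

end TwoClasses

theorem stmt0_general {V : Type*} [Fintype V] [DecidableEq V] {d : ℕ}
    (f : V → EuclideanSpace ℝ (Fin d))
    (C1 C2 : Finset V) (hdisj : Disjoint C1 C2) (hunion : C1 ∪ C2 = Finset.univ)
    (s : ℕ)
    {Ω : Type*} [Fintype Ω] (w : Ω → ℝ)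
    (part : Ω → V → Finset V)
    (hcluster : ∀ ω u v, v ∈ part ω u ↔ part ω u = part ω v)
    (hcard : ∀ ω u, (part ω u).card = s)
    (q1 q2 q12 : ℝ)
    (hq1 : ∀ u ∈ C1, ∀ v ∈ C1, u ≠ v →
      ∑ ω, w ω * (if v ∈ part ω u then (1 : ℝ) else 0) = q1)
    (hq2 : ∀ u ∈ C2, ∀ v ∈ C2, u ≠ v →
      ∑ ω, w ω * (if v ∈ part ω u then (1 : ℝ) else 0) = q2)
    (hq12 : ∀ u ∈ C1, ∀ v ∈ C2,
      ∑ ω, w ω * (if v ∈ part ω u then (1 : ℝ) else 0) = q12) :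
    ∑ ω, w ω * ∑ u : V, (s : ℝ) * ‖f u - (s : ℝ)⁻¹ • ∑ v ∈ part ω u, f v‖ ^ 2
      = q1 * ((1 / 2) * ∑ p ∈ C1.offDiag, ‖f p.1 - f p.2‖ ^ 2)
        + q2 * ((1 / 2) * ∑ p ∈ C2.offDiag, ‖f p.1 - f p.2‖ ^ 2)
        + q12 * ∑ u ∈ C1, ∑ v ∈ C2, ‖f u - f v‖ ^ 2 := by
  calc ∑ ω, w ω * ∑ u : V, (s : ℝ) * ‖f u - (s : ℝ)⁻¹ • ∑ v ∈ part ω u, f v‖ ^ 2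
      = ∑ ω, w ω * ((1 / 2) * ∑ u, ∑ v ∈ part ω u, ‖f u - f v‖ ^ 2) := by
        refine sum_congr rfl fun ω _ => ?_
        rw [← sum_card_mul_norm_sub_centroid_sq_of_cluster (hcluster ω) f]
        simp only [hcard]
    _ = (1 / 2) * ∑ u, ∑ v, coclusterProb w part u v * ‖f u - f v‖ ^ 2 := by
        simp only [mul_left_comm (w _) (1 / 2), ← mul_sum]
        rw [sum_mul_sum_sum_mem_eq_sum_coclusterProb_mul]
    _ = _ := by
        rw [sum_sum_mul_eq_of_two_classes (g := fun u v => ‖f u - f v‖ ^ 2) hdisj hunion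
          (coclusterProb_comm w hcluster) (fun u v => by rw [norm_sub_rev]) (fun u => by simp)
          hq1 hq2 hq12]
        ring

/-- Let `V` be a finite set partitioned into two disjoint classes `C1` and
`C2`, `f : V → ℝ^d`, and `s ≥ 1`. Let `𝒫` be a probability distribution (modeled by a finite
sample space `Ω` with weights `w`) over partitions of `V` into clusters of size exactly `s`;
the partition at sample `ω` is encoded by `part ω u`, the cluster containing `u`.
If the probability that two distinct nodes of `C1` lie in the same cluster is `q1`, the
probability for two distinct nodes of `C2` is `q2`, and the probability for a node of `C1`
and a node of `C2` is `q12`, then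
`E[ Σ_{clusters S_i} Σ_{u ∈ S_i} s‖f(u) − f(S_i)‖² ]`
(the inner double sum equals `Σ_{u ∈ V}` since the clusters partition `V`)
equals `q1·Σ_{unordered pairs in C1} + q2·Σ_{unordered pairs in C2} + q12·Σ_{C1×C2}` of
squared embedding distances; unordered distinct-pair sums are written as half the
corresponding ordered off-diagonal sums. -/
theorem stmt0 {V : Type*} [Fintype V] [DecidableEq V] {d : ℕ}
    (f : V → EuclideanSpace ℝ (Fin d))
    (C1 C2 : Finset V) (hdisj : Disjoint C1 C2) (hunion : C1 ∪ C2 = Finset.univ)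
    (s : ℕ) (hs : 1 ≤ s)
    {Ω : Type*} [Fintype Ω] (w : Ω → ℝ)
    (hw0 : ∀ ω, 0 ≤ w ω) (hw1 : ∑ ω, w ω = 1)
    (part : Ω → V → Finset V)
    (hmem : ∀ ω u, u ∈ part ω u)
    (hcluster : ∀ ω u v, v ∈ part ω u ↔ part ω u = part ω v)
    (hcard : ∀ ω u, (part ω u).card = s)
    (q1 q2 q12 : ℝ)
    (hq1 : ∀ u ∈ C1, ∀ v ∈ C1, u ≠ v →
      ∑ ω, w ω * (if v ∈ part ω u then (1 : ℝ) else 0) = q1)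
    (hq2 : ∀ u ∈ C2, ∀ v ∈ C2, u ≠ v →
      ∑ ω, w ω * (if v ∈ part ω u then (1 : ℝ) else 0) = q2)
    (hq12 : ∀ u ∈ C1, ∀ v ∈ C2,
      ∑ ω, w ω * (if v ∈ part ω u then (1 : ℝ) else 0) = q12) :
    ∑ ω, w ω * ∑ u : V, (s : ℝ) * ‖f u - (s : ℝ)⁻¹ • ∑ v ∈ part ω u, f v‖ ^ 2
      = q1 * ((1 / 2) * ∑ p ∈ C1.offDiag, ‖f p.1 - f p.2‖ ^ 2)
        + q2 * ((1 / 2) * ∑ p ∈ C2.offDiag, ‖f p.1 - f p.2‖ ^ 2)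
        + q12 * ∑ u ∈ C1, ∑ v ∈ C2, ‖f u - f v‖ ^ 2 :=
  stmt0_general f C1 C2 hdisj hunion s w part hcluster hcard q1 q2 q12 hq1 hq2 hq12
end

section
/- Let 0 < σ1 < σ2 and μ ∈ ℝ. For the two-class 1-dimensional QDA rule with class 1 = N(μ, σ1²) and class 2 = N(μ, σ2²), the probability that a sample drawn from class 1 is misclassified equals the standard Gaussian tail probability p1 = N(μ, σ1²)({ x : s_2(x) > s_1(x) }) = N(0, 1)({ z : z² > 2σ2² · log(σ2/σ1) / (σ2² − σ1²) }). -/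
/-!
Writing `x = σ1 z + μ` with `z ~ N(0, 1)`, the score difference is
`s₂(x) - s₁(x) = (σ2² - σ1²) / (2σ2²) · z² - log (σ2 / σ1)`, whose leading coefficient is
positive because `σ1 < σ2`; so class 2 wins exactly when `z²` exceeds the stated threshold.
-/

open ProbabilityTheory MeasureTheory

lemma gaussianReal_map_mul_add (σ μ : ℝ) :
    (gaussianReal 0 1).map (fun z ↦ σ * z + μ) = gaussianReal μ ⟨σ ^ 2, sq_nonneg σ⟩ := by
  have hcomp : (fun z : ℝ ↦ σ * z + μ) = (· + μ) ∘ (σ * ·) := rfl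
  rw [hcomp, ← Measure.map_map (by fun_prop) (by fun_prop), gaussianReal_map_const_mul,
    gaussianReal_map_add_const, mul_zero, zero_add, mul_one]
  rfl

noncomputable def qdaScore (σ μ x : ℝ) : ℝ := -Real.log σ - (x - μ) ^ 2 / (2 * σ ^ 2)

lemma qdaScore_sub_qdaScore {σ1 σ2 : ℝ} (h1 : 0 < σ1) (h2 : 0 < σ2) (μ z : ℝ) :
    qdaScore σ2 μ (σ1 * z + μ) - qdaScore σ1 μ (σ1 * z + μ)
      = (σ2 ^ 2 - σ1 ^ 2) / (2 * σ2 ^ 2) * z ^ 2 - Real.log (σ2 / σ1) := by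
  rw [qdaScore, qdaScore, Real.log_div h2.ne' h1.ne']
  field_simp
  ring

lemma qdaScore_lt_qdaScore_iff {σ1 σ2 : ℝ} (h1 : 0 < σ1) (h12 : σ1 < σ2) (μ z : ℝ) :
    qdaScore σ1 μ (σ1 * z + μ) < qdaScore σ2 μ (σ1 * z + μ)
      ↔ 2 * σ2 ^ 2 * Real.log (σ2 / σ1) / (σ2 ^ 2 - σ1 ^ 2) < z ^ 2 := by
  have h2 : 0 < σ2 := h1.trans h12
  have hgap : 0 < σ2 ^ 2 - σ1 ^ 2 := by nlinarith
  rw [← sub_pos, qdaScore_sub_qdaScore h1 h2, sub_pos, ← div_lt_iff₀' (by positivity),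
    div_div_eq_mul_div, mul_comm]

/-- Let `0 < σ1 < σ2` and `μ ∈ ℝ`. For the two-class 1-dimensional QDA rule
with class 1 = `N(μ, σ1²)` and class 2 = `N(μ, σ2²)` (discriminant score of class `c` being
`s_c(x) = −log σ_c − (x−μ)²/(2σ_c²)`), the probability that a sample drawn from class 1 is
misclassified equals the standard Gaussian tail probability
`p1 = N(μ, σ1²)({x : s_2(x) > s_1(x)}) = N(0,1)({z : z² > 2σ2²·log(σ2/σ1)/(σ2² − σ1²)})`. -/
theorem stmt4 (σ1 σ2 μ : ℝ) (h1 : 0 < σ1) (h12 : σ1 < σ2) :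
    gaussianReal μ ⟨σ1 ^ 2, sq_nonneg σ1⟩
        {x : ℝ | -Real.log σ2 - (x - μ) ^ 2 / (2 * σ2 ^ 2)
            > -Real.log σ1 - (x - μ) ^ 2 / (2 * σ1 ^ 2)}
      = gaussianReal 0 1
          {z : ℝ | z ^ 2 > 2 * σ2 ^ 2 * Real.log (σ2 / σ1) / (σ2 ^ 2 - σ1 ^ 2)} := by
  change gaussianReal μ _ {x | qdaScore σ1 μ x < qdaScore σ2 μ x}
    = gaussianReal 0 1 {z | 2 * σ2 ^ 2 * Real.log (σ2 / σ1) / (σ2 ^ 2 - σ1 ^ 2) < z ^ 2}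
  have hmeas : MeasurableSet {x : ℝ | qdaScore σ1 μ x < qdaScore σ2 μ x} :=
    measurableSet_lt (by unfold qdaScore; fun_prop) (by unfold qdaScore; fun_prop)
  rw [← gaussianReal_map_mul_add σ1 μ, Measure.map_apply (by fun_prop) hmeas]
  congr 1
  ext z
  exact qdaScore_lt_qdaScore_iff h1 h12 μ z
end

section
/- Let 0 < σ1 < σ2 and μ ∈ ℝ. For the two-class 1-dimensional QDA rule with class 1 = N(μ, σ1²) and class 2 = N(μ, σ2²), the probability that a sample drawn from class 2 is misclassified equals p2 = N(μ, σ2²)({ x : s_1(x) > s_2(x) }) = N(0, 1)({ z : z² < 2σ1² · log(σ2/σ1) / (σ2² − σ1²) }). -/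
/-!
Writing `x = σ2 * z + μ` pushes `N(0, 1)` forward to `N(μ, σ2²)`. Comparing the two scores is a
linear inequality in `(x - μ)² = σ2² z²`, since the score gap is
`log (σ2 / σ1) - (x - μ)² (σ2² - σ1²) / (2 σ1² σ2²)`; hence the region where class 1 wins pulls
back to `{z | z² < 2 σ1² log (σ2 / σ1) / (σ2² - σ1²)}`.
-/

open ProbabilityTheory MeasureTheory

lemma gaussianReal_eq_map_affine_standard (μ σ : ℝ) :
    gaussianReal μ ⟨σ ^ 2, sq_nonneg σ⟩ = (gaussianReal 0 1).map (fun z ↦ σ * z + μ) := by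
  have hcomp : (fun z ↦ σ * z + μ) = (· + μ) ∘ (σ * ·) := rfl
  rw [hcomp, ← Measure.map_map (by fun_prop) (by fun_prop), gaussianReal_map_const_mul,
    gaussianReal_map_add_const, mul_zero, zero_add, mul_one]
  rfl

lemma neg_log_sub_sq_div_lt_iff {σ1 σ2 : ℝ} (h1 : 0 < σ1) (h12 : σ1 < σ2) (d : ℝ) :
    -Real.log σ2 - d / (2 * σ2 ^ 2) < -Real.log σ1 - d / (2 * σ1 ^ 2) ↔
      d < 2 * σ1 ^ 2 * σ2 ^ 2 * Real.log (σ2 / σ1) / (σ2 ^ 2 - σ1 ^ 2) := by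
  have h2 : 0 < σ2 := h1.trans h12
  have hgap : 0 < σ2 ^ 2 - σ1 ^ 2 := by nlinarith
  rw [Real.log_div h2.ne' h1.ne', lt_div_iff₀ hgap]
  constructor <;> intro h
  · field_simp at h
    nlinarith
  · field_simp
    nlinarith

/-- Let `0 < σ1 < σ2` and `μ ∈ ℝ`. For the two-class 1-dimensional QDA rule
with class 1 = `N(μ, σ1²)` and class 2 = `N(μ, σ2²)` (discriminant score of class `c` being
`s_c(x) = −log σ_c − (x−μ)²/(2σ_c²)`), the probability that a sample drawn from class 2 is
misclassified equals
`p2 = N(μ, σ2²)({x : s_1(x) > s_2(x)}) = N(0,1)({z : z² < 2σ1²·log(σ2/σ1)/(σ2² − σ1²)})`. -/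
theorem stmt5 (σ1 σ2 μ : ℝ) (h1 : 0 < σ1) (h12 : σ1 < σ2) :
    gaussianReal μ ⟨σ2 ^ 2, sq_nonneg σ2⟩
        {x : ℝ | -Real.log σ1 - (x - μ) ^ 2 / (2 * σ1 ^ 2)
            > -Real.log σ2 - (x - μ) ^ 2 / (2 * σ2 ^ 2)}
      = gaussianReal 0 1
          {z : ℝ | z ^ 2 < 2 * σ1 ^ 2 * Real.log (σ2 / σ1) / (σ2 ^ 2 - σ1 ^ 2)} := by
  rw [gaussianReal_eq_map_affine_standard, Measure.map_apply (by fun_prop)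
    (measurableSet_lt (by fun_prop) (by fun_prop))]
  congr 1
  ext z
  simp only [Set.mem_preimage, Set.mem_ofPred_eq, add_sub_cancel_right,
    neg_log_sub_sq_div_lt_iff h1 h12, mul_pow]
  rw [show 2 * σ1 ^ 2 * σ2 ^ 2 * Real.log (σ2 / σ1) / (σ2 ^ 2 - σ1 ^ 2)
      = σ2 ^ 2 * (2 * σ1 ^ 2 * Real.log (σ2 / σ1) / (σ2 ^ 2 - σ1 ^ 2)) by ring]
  exact mul_lt_mul_iff_right₀ (pow_pos (h1.trans h12) 2)
end
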